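/- arXiv:2201.06184 — 3 statements merged into one kernel-verified Lean document; each statement's English description precedes it below -/
import Mathlib

section
/- Unconditionally, for every real x > 2, ∫_2^x (θ(t) − t)/t² dt < 0. -/
/-!
Abel summation turns the integral into `∑_{p ≤ x} log p / p - θ(x)/x - log (x/2)`.
For `x ≥ 8` this is negative by Chebyshev's argument: from `x/p < ⌊x/p⌋ + 1` and
`∏_{p ≤ x} p ^ ⌊x/p⌋ ∣ ⌊x⌋!` we get `x ∑ log p / p < log ⌊x⌋! + θ(x)`, and Stirling's
upper bound `log n! ≤ n log n - n + (log n)/2 + 1` gives `log ⌊x⌋! ≤ x log (x/2)`.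
For `2 < x ≤ 8` the integrand itself is negative, since `θ(t) < t` for `t < 8`.
-/

open MeasureTheory Filter

/-- `theta x = ∑_{p ≤ x} log p`, the Chebyshev theta function. -/
noncomputable def theta (x : ℝ) : ℝ :=
  ∑ p ∈ Finset.filter Nat.Prime (Finset.range (⌊x⌋₊ + 1)), Real.log p

open Finset Real Function
open scoped Nat Chebyshev

theorem theta_eq_chebyshev_theta : theta = θ := by
  funext x
  rw [theta, Chebyshev.theta_eq_sum_primesLE]
  rfl

theorem log_factorial_le_stirling {n : ℕ} (hn : n ≠ 0) :
    log n ! ≤ n * log n - n + log n / 2 + 1 := by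
  obtain ⟨m, rfl⟩ := Nat.exists_eq_succ_of_ne_zero hn
  have h := Stirling.log_stirlingSeq'_antitone (Nat.zero_le m)
  simp only [comp_apply, Stirling.stirlingSeq_one] at h
  rw [Stirling.log_stirlingSeq_formula, log_div (exp_pos 1).ne' (by positivity), log_exp,
    log_sqrt zero_le_two, log_mul two_ne_zero (by positivity),
    log_div (by positivity) (exp_pos 1).ne', log_exp] at h
  linarith

theorem Nat.Prime.pow_div_dvd_factorial {p : ℕ} (hp : p.Prime) (n : ℕ) : p ^ (n / p) ∣ n ! :=
  (pow_dvd_of_le_emultiplicity (by rw [hp.emultiplicity_factorial_mul]; exact le_add_self)).trans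
    (Nat.factorial_dvd_factorial (Nat.mul_div_le n p))

theorem prod_primesLE_pow_div_dvd_factorial (n : ℕ) :
    ∏ p ∈ Nat.primesLE n, p ^ (n / p) ∣ n ! := by
  have hcop : (Nat.primesLE n : Set ℕ).Pairwise
      (IsCoprime on fun p => ((p ^ (n / p) : ℕ) : ℤ)) := by
    intro p hp q hq hpq
    rw [onFun, Nat.isCoprime_iff_coprime]
    exact ((Nat.coprime_primes (Nat.mem_primesLE.1 hp).2 (Nat.mem_primesLE.1 hq).2).2 hpq).pow _ _
  exact_mod_cast Finset.prod_dvd_of_coprime hcop fun p hp =>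
    Int.natCast_dvd_natCast.2 ((Nat.mem_primesLE.1 hp).2.pow_div_dvd_factorial n)

theorem sum_primesLE_div_mul_log_le_log_factorial (n : ℕ) :
    ∑ p ∈ Nat.primesLE n, (n / p : ℕ) * log p ≤ log n ! := by
  have hpos : 0 < ∏ p ∈ Nat.primesLE n, p ^ (n / p) :=
    prod_pos fun p hp => pow_pos (Nat.mem_primesLE.1 hp).2.pos _
  calc ∑ p ∈ Nat.primesLE n, (n / p : ℕ) * log p
      = log (∏ p ∈ Nat.primesLE n, p ^ (n / p) : ℕ) := by
        rw [Nat.cast_prod, log_prod fun p hp => by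
          have := (Nat.mem_primesLE.1 hp).2.pos; positivity]
        simp [Real.log_pow]
    _ ≤ log n ! := log_le_log (by exact_mod_cast hpos)
        (by exact_mod_cast Nat.le_of_dvd n.factorial_pos (prod_primesLE_pow_div_dvd_factorial n))

theorem mul_sum_primesLE_log_div_lt {x : ℝ} (hx : 2 ≤ x) :
    x * ∑ p ∈ Nat.primesLE ⌊x⌋₊, log p / p < log ⌊x⌋₊ ! + θ x := by
  have h2 : 2 ∈ Nat.primesLE ⌊x⌋₊ :=
    Nat.mem_primesLE.2 ⟨Nat.le_floor (by exact_mod_cast hx), Nat.prime_two⟩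
  calc x * ∑ p ∈ Nat.primesLE ⌊x⌋₊, log p / p
      = ∑ p ∈ Nat.primesLE ⌊x⌋₊, log p * (x / p) := by
        rw [mul_sum]; exact sum_congr rfl fun p _ => by ring
    _ < ∑ p ∈ Nat.primesLE ⌊x⌋₊, log p * ((⌊x⌋₊ / p : ℕ) + 1) := by
        refine sum_lt_sum_of_nonempty ⟨2, h2⟩ fun p hp => ?_
        have hlog : 0 < log p := log_pos (by exact_mod_cast (Nat.mem_primesLE.1 hp).2.one_lt)
        refine mul_lt_mul_of_pos_left ?_ hlog
        rw [← Nat.floor_div_natCast]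
        exact Nat.lt_floor_add_one _
    _ = ∑ p ∈ Nat.primesLE ⌊x⌋₊, (⌊x⌋₊ / p : ℕ) * log p + θ x := by
        rw [Chebyshev.theta_eq_sum_primesLE, ← sum_add_distrib]
        exact sum_congr rfl fun p _ => by ring
    _ ≤ log ⌊x⌋₊ ! + θ x := by grw [sum_primesLE_div_mul_log_le_log_factorial]

theorem log_factorial_floor_le_mul_log_half {x : ℝ} (hx : 8 ≤ x) :
    log ⌊x⌋₊ ! ≤ x * log (x / 2) := by
  have hn : (8 : ℝ) ≤ ⌊x⌋₊ := by exact_mod_cast Nat.le_floor (by exact_mod_cast hx)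
  have hnx : (⌊x⌋₊ : ℝ) ≤ x := Nat.floor_le (by linarith)
  have hlogn : log ⌊x⌋₊ ≤ log x := log_le_log (by linarith) hnx
  have hlogn1 : 1 ≤ log ⌊x⌋₊ := by
    rw [le_log_iff_exp_le (by linarith)]; linarith [exp_one_lt_d9]
  have hlog8 : log x ≤ 3 * log 2 + x / 8 - 1 := by
    have := log_le_sub_one_of_pos (x := x / 8) (by positivity)
    rw [log_div (by linarith) (by norm_num), show (8 : ℝ) = 2 ^ 3 by norm_num, log_pow] at this
    push_cast at this
    linarith
  have hmain : ⌊x⌋₊ * (log ⌊x⌋₊ - 1) ≤ x * (log x - 1) :=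
    mul_le_mul hnx (by linarith) (by linarith) (by linarith)
  have hlog2 : x * log 2 ≤ x * 0.6931471808 := by
    gcongr; exact log_two_lt_d9.le
  have hstirling := log_factorial_le_stirling (Nat.floor_pos.2 (by linarith : (1 : ℝ) ≤ x)).ne'
  -- what is left is `log x / 2 + 1 ≤ x (1 - log 2)`, true from `x = 8` on
  rw [log_div (by linarith) two_ne_zero]
  linarith [log_two_lt_d9]

theorem sum_primesLE_log_div_sub_theta_div_lt_log_half {x : ℝ} (hx : 8 ≤ x) :
    ∑ p ∈ Nat.primesLE ⌊x⌋₊, log p / p - θ x / x < log (x / 2) := by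
  have hx0 : 0 < x := by linarith
  rw [sub_lt_iff_lt_add, ← mul_lt_mul_iff_right₀ hx0, mul_add, mul_div_cancel₀ _ hx0.ne']
  linarith [mul_sum_primesLE_log_div_lt (by linarith : (2 : ℝ) ≤ x),
    log_factorial_floor_le_mul_log_half hx]

theorem intervalIntegrable_theta_div_sq {a b : ℝ} (ha : 0 < a) (hb : 0 < b) :
    IntervalIntegrable (fun t => θ t / t ^ 2) volume a b := by
  have hcont : ContinuousOn (fun t : ℝ => (t ^ 2)⁻¹) (Set.uIcc a b) :=
    ContinuousOn.inv₀ (by fun_prop) fun t ht => by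
      have : 0 < t := (lt_min ha hb).trans_le ht.1
      positivity
  simpa [div_eq_mul_inv] using
    (Chebyshev.theta_mono.monotoneOn _).intervalIntegrable.mul_continuousOn hcont

theorem sum_primesLE_log_div_eq_theta_div_add_integral {x : ℝ} (hx : 2 ≤ x) :
    ∑ p ∈ Nat.primesLE ⌊x⌋₊, log p / p = θ x / x + ∫ t in 2..x, θ t / t ^ 2 := by
  have hderiv : deriv (fun t : ℝ => t⁻¹) = fun t => -(t ^ 2)⁻¹ := by
    funext t; simp
  have hcont : ContinuousOn (fun t : ℝ => -(t ^ 2)⁻¹) (Set.Icc 2 x) :=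
    ContinuousOn.neg <| ContinuousOn.inv₀ (by fun_prop) fun t ht => by
      have : 0 < t := by linarith [ht.1]
      positivity
  have abel := sum_mul_eq_sub_integral_mul₁ (fun k : ℕ => if k.Prime then log k else 0)
    (f := fun t : ℝ => t⁻¹) (by simp) (by simp) x
    (fun t ht => differentiableAt_inv (by linarith [ht.1])) (hderiv ▸ hcont.integrableOn_Icc)
  simp only [mul_ite, mul_zero, ← sum_filter, ← Chebyshev.theta_eq_sum_Icc, hderiv] at abel
  rw [intervalIntegral.integral_of_le hx, Nat.primesLE_eq_filter_Icc_zero]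
  convert abel using 1
  · simp [div_eq_inv_mul]
  · simp [div_eq_inv_mul, integral_neg]

theorem theta_sub_id_div_sq (t : ℝ) : (θ t - t) / t ^ 2 = θ t / t ^ 2 - t⁻¹ := by
  rw [sub_div, sq, div_self_mul_self']

theorem intervalIntegrable_inv_of_pos {a b : ℝ} (ha : 0 < a) (hb : 0 < b) :
    IntervalIntegrable (fun t : ℝ => t⁻¹) volume a b := by
  refine intervalIntegrable_inv_iff.2 (.inr ?_)
  rw [Set.mem_uIcc]
  rintro (h | h) <;> linarith [h.1]

theorem integral_theta_sub_id_div_sq_eq {x : ℝ} (hx : 2 ≤ x) :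
    ∫ t in 2..x, (θ t - t) / t ^ 2 =
      ∑ p ∈ Nat.primesLE ⌊x⌋₊, log p / p - θ x / x - log (x / 2) := by
  simp only [theta_sub_id_div_sq]
  rw [intervalIntegral.integral_sub (intervalIntegrable_theta_div_sq two_pos (by linarith))
    (intervalIntegrable_inv_of_pos two_pos (by linarith)),
    integral_inv_of_pos two_pos (by linarith), sum_primesLE_log_div_eq_theta_div_add_integral hx]
  ring

theorem primorial_lt_exp_of_lt_eight {n : ℕ} (hn : n ≠ 0) (h8 : n < 8) :
    (primorial n : ℝ) < exp n := by
  have he : (2.7 : ℝ) ^ n < exp n := by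
    rw [← exp_one_pow]
    exact pow_lt_pow_left₀ (exp_one_gt_d9.trans' (by norm_num)) (by norm_num) hn
  refine lt_of_le_of_lt ?_ he
  interval_cases n <;> norm_num [primorial, prod_filter, prod_range_succ]

theorem theta_lt_self_of_lt_eight {t : ℝ} (h1 : 1 ≤ t) (h8 : t < 8) : θ t < t := by
  have hn : ⌊t⌋₊ ≠ 0 := Nat.one_le_iff_ne_zero.1 ((Nat.one_le_floor_iff t).2 h1)
  have h8' : ⌊t⌋₊ < 8 := (Nat.floor_lt (by linarith)).2 (by exact_mod_cast h8)
  rw [Chebyshev.theta_eq_log_primorial, log_lt_iff_lt_exp (by exact_mod_cast primorial_pos _)]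
  exact (primorial_lt_exp_of_lt_eight hn h8').trans_le (exp_le_exp.2 (Nat.floor_le (by linarith)))

theorem integral_theta_sub_id_div_sq_neg_of_le_eight {x : ℝ} (hx2 : 2 < x) (hx8 : x ≤ 8) :
    ∫ t in 2..x, (θ t - t) / t ^ 2 < 0 := by
  have hint : IntervalIntegrable (fun t => -((θ t - t) / t ^ 2)) volume 2 x := by
    simp only [theta_sub_id_div_sq]
    exact ((intervalIntegrable_theta_div_sq two_pos (by linarith)).sub
      (intervalIntegrable_inv_of_pos two_pos (by linarith))).neg
  have hpos := intervalIntegral.intervalIntegral_pos_of_pos_on hint (fun t ht => ?_) hx2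
  · rwa [intervalIntegral.integral_neg, neg_pos] at hpos
  · have hθ := theta_lt_self_of_lt_eight (by linarith [ht.1]) (ht.2.trans_le hx8)
    exact neg_pos.2 (div_neg_of_neg_of_pos (by linarith) (pow_pos (by linarith [ht.1]) 2))

theorem integral_theta_sub_id_div_sq_neg (x : ℝ) (hx : x > 2) :
    (∫ t in (2:ℝ)..x, (theta t - t) / t ^ 2) < 0 := by
  rw [theta_eq_chebyshev_theta]
  rcases le_or_gt x 8 with hx8 | hx8
  · exact integral_theta_sub_id_div_sq_neg_of_le_eight hx hx8
  · rw [integral_theta_sub_id_div_sq_eq hx.le]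
    linarith [sum_primesLE_log_div_sub_theta_div_lt_log_half hx8.le]
end

section
/- Unconditionally, for every real x > 2, ∫_2^x (ψ(t) − t)/t² dt < 0. -/
/-!
On `(2, 6)` the integrand is negative: there `ψ t = log lcm(1, …, ⌊t⌋) ≤ log ⌊t⌋!`, and
`n! < eⁿ` for `n ≤ 5`. For `x ≥ 6`, Abel summation gives
`∫₂ˣ (ψ t - t) / t² dt = ∑_{n ≤ x} Λ n / n - ψ x / x - log (x / 2)`.
Since `x / n - 1 < ⌊x / n⌋ = ⌊N / n⌋` with `N = ⌊x⌋`, Chebyshev's identity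
`∑_{n ≤ N} Λ n ⌊N / n⌋ = log N!` bounds `x` times the first two terms strictly by `log N!`,
and `N! ≤ (N / 2) ^ N` for `N ≥ 6` finishes the proof.
-/

open MeasureTheory Filter

/-- `psi x = ∑_{p^m ≤ x} log p`, the Chebyshev psi function. -/
noncomputable def psi (x : ℝ) : ℝ :=
  ∑ n ∈ Finset.Icc 1 ⌊x⌋₊, ArithmeticFunction.vonMangoldt n

open Finset Real
open scoped ArithmeticFunction.vonMangoldt Chebyshev

theorem psi_eq_chebyshev_psi : psi = Chebyshev.psi := rfl

theorem sub_div_sq_eq_div_sq_sub_inv {K : Type*} [DivisionRing K] (a t : K) :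
    (a - t) / t ^ 2 = a / t ^ 2 - t⁻¹ := by
  rw [sub_div, sq, div_self_mul_self']

theorem Nat.sum_Ioc_sum_divisors_eq_sum_div_smul {M : Type*} [AddCommMonoid M] (f : ℕ → M)
    (N : ℕ) :
    ∑ m ∈ Ioc 0 N, ∑ d ∈ m.divisors, f d = ∑ d ∈ Ioc 0 N, (N / d) • f d := by
  rw [sum_comm' (t' := Ioc 0 N) (s' := fun d => {m ∈ Ioc 0 N | d ∣ m})]
  · simp_rw [sum_const, Nat.Ioc_filter_dvd_card_eq_div]
  · intro m d
    simp only [mem_Ioc, Nat.mem_divisors, mem_filter]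
    constructor
    · rintro ⟨⟨hm, hmN⟩, hdm, -⟩
      exact ⟨⟨⟨hm, hmN⟩, hdm⟩, Nat.pos_of_dvd_of_pos hdm hm, (Nat.le_of_dvd hm hdm).trans hmN⟩
    · rintro ⟨⟨⟨hm, hmN⟩, hdm⟩, -⟩
      exact ⟨⟨hm, hmN⟩, hdm, hm.ne'⟩

theorem sum_Ioc_log_eq_sum_vonMangoldt_mul_div (N : ℕ) :
    ∑ m ∈ Ioc 0 N, log m = ∑ n ∈ Ioc 0 N, Λ n * (N / n : ℕ) := by
  simp_rw [← ArithmeticFunction.vonMangoldt_sum, Nat.sum_Ioc_sum_divisors_eq_sum_div_smul,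
    nsmul_eq_mul, mul_comm]

theorem log_two_le_mul_log_add_one_div {n : ℕ} (hn : 0 < n) :
    log 2 ≤ n * log ((n + 1) / n) := by
  have hn' : (0 : ℝ) < n := by exact_mod_cast hn
  have hbernoulli : (2 : ℝ) ≤ ((n + 1) / n) ^ n := by
    have h := one_add_mul_le_pow (a := 1 / (n : ℝ)) (by linarith [one_div_pos.mpr hn']) n
    rwa [mul_one_div_cancel hn'.ne', one_add_one_eq_two, one_add_div hn'.ne'] at h
  rw [← log_pow]
  exact log_le_log two_pos hbernoulli

theorem sum_Ioc_log_le_mul_log_div_two {N : ℕ} (hN : 6 ≤ N) :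
    ∑ m ∈ Ioc 0 N, log m ≤ N * log (N / 2) := by
  induction N, hN using Nat.le_induction with
  | base =>
    have h720 : ∑ m ∈ Ioc (0 : ℕ) 6, log (m : ℝ) = log 720 := by
      rw [← log_prod fun m hm => Nat.cast_ne_zero.mpr (mem_Ioc.mp hm).1.ne', ← Nat.cast_prod]
      rfl
    rw [h720, ← log_pow]
    exact log_le_log (by norm_num) (by norm_num)
  | succ N hN ih =>
    have hN₀ : (0 : ℝ) < N := by exact_mod_cast (by omega : 0 < N)
    have hstep := log_two_le_mul_log_add_one_div (n := N) (by omega)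
    rw [log_div (by positivity) hN₀.ne'] at hstep
    rw [log_div (by positivity) two_ne_zero] at ih ⊢
    rw [sum_Ioc_succ_top (by omega)]
    push_cast
    linarith

namespace Chebyshev

theorem psi_natCast_lt_self {n : ℕ} (hn₀ : 0 < n) (hn₅ : n ≤ 5) : ψ n < n := by
  have hlcm : (Nat.lcmUpto n : ℝ) ≤ n.factorial :=
    mod_cast Nat.le_of_dvd n.factorial_pos (Nat.lcmUpto_dvd_factorial n)
  have hexp : (2.7 : ℝ) ^ n ≤ exp n := by
    rw [← exp_one_pow]
    exact pow_le_pow_left₀ (by norm_num) (lt_trans (by norm_num) exp_one_gt_d9).le n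
  rw [psi_eq_log_lcmUpto, log_lt_iff_lt_exp (mod_cast Nat.lcmUpto_pos n)]
  refine hlcm.trans_lt (lt_of_lt_of_le ?_ hexp)
  interval_cases n <;> norm_num [Nat.factorial]

theorem psi_lt_self_of_lt_six {t : ℝ} (ht₀ : 0 < t) (ht₆ : t < 6) : ψ t < t := by
  rw [psi_eq_psi_coe_floor]
  obtain ht₁ | ht₁ := lt_or_ge t 1
  · rwa [Nat.floor_eq_zero.mpr ht₁, Nat.cast_zero, psi_zero]
  have hN₀ : 0 < ⌊t⌋₊ := Nat.floor_pos.mpr ht₁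
  have hN₅ : ⌊t⌋₊ ≤ 5 :=
    Nat.le_of_lt_succ (Nat.floor_lt ht₀.le |>.mpr (by exact_mod_cast ht₆))
  exact (psi_natCast_lt_self hN₀ hN₅).trans_le (Nat.floor_le ht₀.le)

theorem mul_sum_vonMangoldt_div_sub_psi_lt_sum_log {x : ℝ} (hx : 2 ≤ x) :
    x * ∑ n ∈ Ioc 0 ⌊x⌋₊, Λ n / n - ψ x < ∑ m ∈ Ioc 0 ⌊x⌋₊, log m := by
  have hfloor (n : ℕ) : x / n - 1 < (⌊x⌋₊ / n : ℕ) := by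
    rw [← Nat.floor_div_natCast]
    exact sub_lt_iff_lt_add.mpr (Nat.lt_floor_add_one _)
  have hterm (n : ℕ) : x * (Λ n / n) - Λ n = Λ n * (x / n - 1) := by ring
  rw [sum_Ioc_log_eq_sum_vonMangoldt_mul_div, Chebyshev.psi, mul_sum, ← sum_sub_distrib]
  simp_rw [hterm]
  refine sum_lt_sum (fun n _ => ?_) ⟨2, mem_Ioc.mpr ⟨two_pos, Nat.le_floor hx⟩, ?_⟩
  · exact mul_le_mul_of_nonneg_left (hfloor n).le ArithmeticFunction.vonMangoldt_nonneg
  · refine mul_lt_mul_of_pos_left (hfloor 2) ?_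
    rw [ArithmeticFunction.vonMangoldt_apply_prime Nat.prime_two]
    exact log_pos one_lt_two

theorem intervalIntegrable_psi_div_sq {a b : ℝ} (ha : 0 < a) (hb : 0 < b) :
    IntervalIntegrable (fun t => ψ t / t ^ 2) volume a b := by
  have hsq : ContinuousOn (fun t : ℝ => (t ^ 2)⁻¹) (Set.uIcc a b) :=
    (continuousOn_pow 2).inv₀ fun t ht =>
      pow_ne_zero 2 (ne_of_mem_of_not_mem ht (Set.notMem_uIcc_of_lt ha hb))
  simpa only [div_eq_mul_inv] using psi_mono.intervalIntegrable.mul_continuousOn hsq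

theorem intervalIntegrable_psi_sub_id_div_sq {a b : ℝ} (ha : 0 < a) (hb : 0 < b) :
    IntervalIntegrable (fun t => (ψ t - t) / t ^ 2) volume a b := by
  simp_rw [sub_div_sq_eq_div_sq_sub_inv]
  exact (intervalIntegrable_psi_div_sq ha hb).sub
    (intervalIntegrable_inv_iff.mpr (Or.inr (Set.notMem_uIcc_of_lt ha hb)))

theorem integral_psi_div_sq {x : ℝ} (hx : 2 ≤ x) :
    ∫ t in (2:ℝ)..x, ψ t / t ^ 2 = ∑ n ∈ Ioc 0 ⌊x⌋₊, Λ n / n - ψ x / x := by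
  have hderiv : ContinuousOn (deriv fun t : ℝ => t⁻¹) (Set.Icc 2 x) := by
    rw [deriv_inv']
    exact ((continuousOn_pow 2).inv₀ fun t ht => by nlinarith [ht.1]).neg
  have habel := sum_mul_eq_sub_integral_mul₁ (fun n => Λ n) (by simp)
    ArithmeticFunction.vonMangoldt_apply_one x (f := fun t => t⁻¹)
    (fun t ht => differentiableAt_inv (by linarith [ht.1])) hderiv.integrableOn_Icc
  simp only [deriv_inv', neg_mul, integral_neg, inv_mul_eq_div, sub_neg_eq_add,
    ← psi_eq_sum_Icc] at habel
  rw [← add_sum_Ioc_eq_sum_Icc (Nat.zero_le _)] at habel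
  simp only [Nat.cast_zero, div_zero, zero_add] at habel
  rw [intervalIntegral.integral_of_le hx, habel]
  ring

theorem integral_psi_sub_id_div_sq {x : ℝ} (hx : 2 ≤ x) :
    ∫ t in (2:ℝ)..x, (ψ t - t) / t ^ 2 =
      ∑ n ∈ Ioc 0 ⌊x⌋₊, Λ n / n - ψ x / x - log (x / 2) := by
  have hx₀ : 0 < x := by linarith
  simp_rw [sub_div_sq_eq_div_sq_sub_inv]
  rw [intervalIntegral.integral_sub (intervalIntegrable_psi_div_sq two_pos hx₀)
      (intervalIntegrable_inv_iff.mpr (Or.inr (Set.notMem_uIcc_of_lt two_pos hx₀))),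
    integral_psi_div_sq hx, integral_inv_of_pos two_pos hx₀]

theorem integral_psi_sub_id_div_sq_neg_of_le_six {x : ℝ} (hx₂ : 2 < x) (hx₆ : x ≤ 6) :
    (∫ t in (2:ℝ)..x, (ψ t - t) / t ^ 2) < 0 := by
  rw [← neg_pos, ← intervalIntegral.integral_neg]
  refine intervalIntegral.intervalIntegral_pos_of_pos_on
    (intervalIntegrable_psi_sub_id_div_sq two_pos (by linarith)).neg (fun t ht => ?_) hx₂
  have ht₀ : 0 < t := by linarith [ht.1]
  rw [neg_pos]
  exact div_neg_of_neg_of_pos (sub_neg.mpr (psi_lt_self_of_lt_six ht₀ (ht.2.trans_le hx₆)))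
    (by positivity)

theorem integral_psi_sub_id_div_sq_neg_of_six_le {x : ℝ} (hx : 6 ≤ x) :
    (∫ t in (2:ℝ)..x, (ψ t - t) / t ^ 2) < 0 := by
  have hx₀ : 0 < x := by linarith
  have hN : 6 ≤ ⌊x⌋₊ := Nat.le_floor (by exact_mod_cast hx)
  have hNx : (⌊x⌋₊ : ℝ) ≤ x := Nat.floor_le hx₀.le
  rw [integral_psi_sub_id_div_sq (by linarith), sub_neg, ← mul_lt_mul_iff_right₀ hx₀]
  calc x * (∑ n ∈ Ioc 0 ⌊x⌋₊, Λ n / n - ψ x / x)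
      = x * ∑ n ∈ Ioc 0 ⌊x⌋₊, Λ n / n - ψ x := by field_simp
    _ < ∑ m ∈ Ioc 0 ⌊x⌋₊, log m := mul_sum_vonMangoldt_div_sub_psi_lt_sum_log (by linarith)
    _ ≤ ⌊x⌋₊ * log (⌊x⌋₊ / 2) := sum_Ioc_log_le_mul_log_div_two hN
    _ ≤ x * log (x / 2) := by
      have hN₆ : (6 : ℝ) ≤ ⌊x⌋₊ := by exact_mod_cast hN
      gcongr
      exact log_nonneg (by linarith)

end Chebyshev

theorem integral_psi_sub_id_div_sq_neg (x : ℝ) (hx : x > 2) :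
    (∫ t in (2:ℝ)..x, (psi t - t) / t ^ 2) < 0 := by
  rw [psi_eq_chebyshev_psi]
  obtain hx₆ | hx₆ := le_total x 6
  · exact Chebyshev.integral_psi_sub_id_div_sq_neg_of_le_six hx hx₆
  · exact Chebyshev.integral_psi_sub_id_div_sq_neg_of_six_le hx₆
end

section
/- For all real x > 1, li(x) < x/log x + 2x/log²x. -/
open MeasureTheory Filter

/-- `li x` is the logarithmic integral, defined for `x > 1` as the Cauchy principal value
`lim_{ε→0⁺} (∫_0^{1-ε} du/log u + ∫_{1+ε}^x du/log u)`. -/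
noncomputable def li (x : ℝ) : ℝ :=
  limUnder (nhdsWithin (0:ℝ) (Set.Ioi 0)) (fun ε =>
    (∫ u in (0:ℝ)..(1 - ε), 1 / Real.log u) + ∫ u in (1 + ε)..x, 1 / Real.log u)

open Real Set Topology intervalIntegral

/-!
Subtracting the pole, `1 / log u = (1 / log u - 1 / (u - 1)) + 1 / (u - 1)` where the first
summand is bounded on `[0, ∞)`; this turns the principal value into the ordinary integral
`li x = ∫₀ˣ (1 / log u - 1 / (u - 1)) du + log (x - 1)`, and in particular `li' = 1 / log` on
`(1, ∞)`. The difference `D x = x / log x + 2 x / log² x - li x` then has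
`D' x = (log x - 4) / log³ x`, so it is smallest at `x = e⁴`, and it remains to check
`li e⁴ < 3 e⁴ / 8` (about `19.63` against `20.47`). The bounds `1 / (u + 1)` on `[0, 1]` and `1 / 2`
on `[1, ∞)` for the regularized integrand give `li e ≤ log 2 + (e - 1) / 2 + (e - 2)`, and on
`[e, e⁴]` the convexity of `1 / log` makes the trapezoidal sum an upper bound for the integral;
its nodes `e^(k/2)` are chosen so that `1 / log` is exactly `2 / k` there.
-/

theorem ConvexOn.integral_le_trapezoid {f : ℝ → ℝ} {a b : ℝ} (hab : a ≤ b)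
    (hf : ConvexOn ℝ (Icc a b) f) (hcont : ContinuousOn f (Icc a b)) :
    ∫ x in a..b, f x ≤ (b - a) * (f a + f b) / 2 := by
  rcases hab.eq_or_lt with rfl | hlt
  · simp
  have hchord : ∀ x ∈ Icc a b, f x ≤ f a + (f b - f a) / (b - a) * (x - a) := by
    intro x ⟨hax, hxb⟩
    have key := hf.2 (left_mem_Icc.2 hab) (right_mem_Icc.2 hab)
      (div_nonneg (sub_nonneg.2 hxb) (sub_pos.2 hlt).le)
      (div_nonneg (sub_nonneg.2 hax) (sub_pos.2 hlt).le) (by field_simp; ring)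
    have hx : ((b - x) / (b - a)) • a + ((x - a) / (b - a)) • b = x := by
      rw [smul_eq_mul, smul_eq_mul]; field_simp; ring
    rw [hx] at key
    refine key.trans (le_of_eq ?_)
    rw [smul_eq_mul, smul_eq_mul]; field_simp; ring
  calc ∫ x in a..b, f x ≤ ∫ x in a..b, (f a + (f b - f a) / (b - a) * (x - a)) :=
        integral_mono_on hab (hcont.intervalIntegrable_of_Icc hab)
          (by apply Continuous.intervalIntegrable; fun_prop) hchord
    _ = (b - a) * (f a + f b) / 2 := by
        rw [integral_add intervalIntegrable_const
            (by apply Continuous.intervalIntegrable; fun_prop),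
          intervalIntegral.integral_const_mul, integral_comp_sub_right (fun x => x), integral_id,
          intervalIntegral.integral_const, smul_eq_mul]
        field_simp
        ring

theorem ConvexOn.integral_le_sum_trapezoid {f : ℝ → ℝ} {s : Set ℝ}
    (hf : ConvexOn ℝ s f) (hcont : ContinuousOn f s) {a : ℕ → ℝ} {m n : ℕ} (hmn : m ≤ n)
    (ha : ∀ k ∈ Finset.Ico m n, a k ≤ a (k + 1))
    (has : ∀ k ∈ Finset.Icc m n, a k ∈ s) :
    ∫ x in a m..a n, f x ≤
      ∑ k ∈ Finset.Ico m n, (a (k + 1) - a k) * (f (a k) + f (a (k + 1))) / 2 := by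
  have hsub : ∀ k ∈ Finset.Ico m n, Icc (a k) (a (k + 1)) ⊆ s := fun k hk =>
    hf.1.ordConnected.out (has k (Finset.Ico_subset_Icc_self hk))
      (has (k + 1) (by simp at hk ⊢; omega))
  rw [← sum_integral_adjacent_intervals_Ico hmn fun k hk =>
    (hcont.mono (hsub k (by simpa using hk))).intervalIntegrable_of_Icc
      (ha k (by simpa using hk))]
  exact Finset.sum_le_sum fun k hk =>
    (hf.subset (hsub k hk) (convex_Icc _ _)).integral_le_trapezoid (ha k hk)
      (hcont.mono (hsub k hk))

theorem two_mul_sub_one_div_add_one_le_log {u : ℝ} (hu : 1 < u) :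
    2 * (u - 1) / (u + 1) ≤ log u := by
  have hsub : 0 < u - 1 := sub_pos.2 hu
  have h := le_hasSum (hasSum_log_one_add_inv (inv_pos.2 hsub)) 0 fun k _ => by positivity
  rw [inv_inv, add_sub_cancel] at h
  refine le_trans (le_of_eq ?_) h
  have hfrac : 2 * (u - 1)⁻¹ + 1 = (u + 1) / (u - 1) := by field_simp; ring
  rw [hfrac]
  norm_num [mul_div_assoc]

theorem sub_inv_div_two_le_log {u : ℝ} (hu : 0 < u) (hu1 : u ≤ 1) :
    (u - u⁻¹) / 2 ≤ log u := by
  rw [← sinh_log hu]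
  exact sinh_le_self_iff.2 (log_nonpos hu.le hu1)

theorem continuousOn_one_div_log : ContinuousOn (fun u => 1 / log u) (Ioi 1) :=
  continuousOn_const.div (continuousOn_log.mono fun _ hu => (zero_lt_one.trans hu).ne')
    fun _ hu => (log_pos hu).ne'

theorem convexOn_one_div_log : ConvexOn ℝ (Ioi 1) fun u => 1 / log u := by
  have hinv : ConvexOn ℝ (log '' Ioi 1) fun y : ℝ => 1 / y := by
    rw [image_log_Ioi one_pos, log_one]
    simpa using convexOn_zpow (𝕜 := ℝ) (-1)
  refine hinv.comp_concaveOn (strictConcaveOn_log_Ioi.concaveOn.subset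
    (Ioi_subset_Ioi zero_le_one) (convex_Ioi 1)) ?_
  rw [image_log_Ioi one_pos, log_one]
  exact fun a ha b _ hab => one_div_le_one_div_of_le ha hab

noncomputable def regInvLog (u : ℝ) : ℝ := 1 / log u - 1 / (u - 1)

theorem regInvLog_nonneg {u : ℝ} (hu : 0 ≤ u) : 0 ≤ regInvLog u := by
  rw [regInvLog, sub_nonneg]
  rcases hu.eq_or_lt with rfl | hu0
  · norm_num
  rcases lt_trichotomy u 1 with hu1 | rfl | hu1
  · exact one_div_le_one_div_of_neg_of_le (sub_neg.2 hu1) (log_le_sub_one_of_pos hu0)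
  · simp
  · exact one_div_le_one_div_of_le (log_pos hu1) (log_le_sub_one_of_pos hu0)

theorem regInvLog_le_one_div_add_one {u : ℝ} (hu0 : 0 ≤ u) (hu1 : u ≤ 1) :
    regInvLog u ≤ 1 / (u + 1) := by
  rcases hu0.eq_or_lt with rfl | hu0
  · norm_num [regInvLog]
  rcases hu1.eq_or_lt with rfl | hu1
  · norm_num [regInvLog]
  have h := one_div_le_one_div_of_neg_of_le (log_neg hu0 hu1) (sub_inv_div_two_le_log hu0 hu1.le)
  have hsub : u - 1 ≠ 0 := (sub_neg.2 hu1).ne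
  have hsq : u ^ 2 - 1 ≠ 0 := by nlinarith
  calc regInvLog u ≤ 1 / ((u - u⁻¹) / 2) - 1 / (u - 1) := sub_le_sub_right h _
    _ = 1 / (u + 1) := by field_simp; ring

theorem regInvLog_le_half {u : ℝ} (hu : 1 ≤ u) : regInvLog u ≤ 1 / 2 := by
  rcases hu.eq_or_lt with rfl | hu
  · norm_num [regInvLog]
  have h := one_div_le_one_div_of_le (by have := sub_pos.2 hu; positivity)
    (two_mul_sub_one_div_add_one_le_log hu)
  calc regInvLog u ≤ 1 / (2 * (u - 1) / (u + 1)) - 1 / (u - 1) := sub_le_sub_right h _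
    _ = 1 / 2 := by field_simp; ring

theorem abs_regInvLog_le_one {u : ℝ} (hu : 0 ≤ u) : |regInvLog u| ≤ 1 := by
  rw [abs_of_nonneg (regInvLog_nonneg hu)]
  rcases le_total u 1 with hu1 | hu1
  · exact (regInvLog_le_one_div_add_one hu hu1).trans
      ((div_le_one (by positivity)).2 (by linarith))
  · linarith [regInvLog_le_half hu1]

theorem intervalIntegrable_regInvLog {a b : ℝ} (ha : 0 ≤ a) (hb : 0 ≤ b) :
    IntervalIntegrable regInvLog volume a b := by
  refine (intervalIntegrable_const (c := (1 : ℝ))).mono_fun' (by unfold regInvLog; fun_prop) ?_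
  refine (ae_restrict_mem measurableSet_uIoc).mono fun u hu => ?_
  exact abs_regInvLog_le_one ((le_min ha hb).trans (uIoc_subset_uIcc hu).1)

theorem integral_one_div_log {a b : ℝ} (ha : 0 ≤ a) (hb : 0 ≤ b) (h1 : (1 : ℝ) ∉ uIcc a b) :
    ∫ u in a..b, 1 / log u = (∫ u in a..b, regInvLog u) + log ((b - 1) / (a - 1)) := by
  have hsplit : (fun u => 1 / log u) = fun u => regInvLog u + 1 / (u - 1) := by
    ext u; simp [regInvLog]
  have hcont : ContinuousOn (fun u : ℝ => 1 / (u - 1)) (uIcc a b) :=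
    continuousOn_const.div (by fun_prop) fun u hu => sub_ne_zero.2 (ne_of_mem_of_not_mem hu h1)
  have h0 : (0 : ℝ) ∉ uIcc (a - 1) (b - 1) := by
    rw [← image_sub_const_uIcc]
    rintro ⟨u, hu, hu1⟩
    exact h1 (sub_eq_zero.1 hu1 ▸ hu)
  rw [hsplit, integral_add (intervalIntegrable_regInvLog ha hb) hcont.intervalIntegrable,
    integral_comp_sub_right (fun u => 1 / u), integral_one_div h0]

theorem li_eq_integral_regInvLog_add_log {x : ℝ} (hx : 1 < x) :
    li x = (∫ u in 0..x, regInvLog u) + log (x - 1) := by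
  have hsmall : ∀ᶠ ε in 𝓝[>] (0 : ℝ), ε ∈ Ioo 0 (min 1 (x - 1)) :=
    Ioo_mem_nhdsGT (lt_min one_pos (sub_pos.2 hx))
  have hgap : Tendsto (fun ε => ∫ u in (1 - ε)..(1 + ε), regInvLog u) (𝓝[>] 0) (𝓝 0) := by
    refine squeeze_zero_norm' (a := fun ε => 2 * ε) ?_ (tendsto_nhdsWithin_of_tendsto_nhds
      ((continuous_const.mul continuous_id).tendsto' 0 0 (mul_zero 2)))
    filter_upwards [hsmall] with ε ⟨hε0, hε1⟩
    have hε1' : ε < 1 := hε1.trans_le (min_le_left _ _)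
    have hbound : ∀ u ∈ uIoc (1 - ε) (1 + ε), ‖regInvLog u‖ ≤ 1 := fun u hu => by
      rw [uIoc_of_le (by linarith)] at hu
      exact abs_regInvLog_le_one (by linarith [hu.1])
    calc ‖∫ u in (1 - ε)..(1 + ε), regInvLog u‖ ≤ 1 * |1 + ε - (1 - ε)| :=
          norm_integral_le_of_norm_le_const hbound
      _ = 2 * ε := by rw [abs_of_pos (by linarith)]; ring
  refine Tendsto.limUnder_eq (Tendsto.congr' ?_ (by simpa using tendsto_const_nhds.sub hgap))
  filter_upwards [hsmall] with ε ⟨hε0, hε1⟩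
  have hε1' : ε < 1 := hε1.trans_le (min_le_left _ _)
  have hεx : ε < x - 1 := hε1.trans_le (min_le_right _ _)
  have hleft : (1 : ℝ) ∉ uIcc 0 (1 - ε) := by
    rw [uIcc_of_le (by linarith)]; exact fun h => by linarith [h.2]
  have hright : (1 : ℝ) ∉ uIcc (1 + ε) x := by
    rw [uIcc_of_le (by linarith)]; exact fun h => by linarith [h.1]
  rw [integral_one_div_log le_rfl (by linarith) hleft,
    integral_one_div_log (by linarith) (by linarith) hright,
    ← integral_add_adjacent_intervals (b := 1 - ε)
      (intervalIntegrable_regInvLog le_rfl (by linarith))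
      (intervalIntegrable_regInvLog (by linarith) (by linarith)),
    ← integral_add_adjacent_intervals (a := 1 - ε) (b := 1 + ε)
      (intervalIntegrable_regInvLog (by linarith) (by linarith))
      (intervalIntegrable_regInvLog (by linarith) (by linarith)),
    show (1 - ε - 1) / (0 - 1) = ε by ring, add_sub_cancel_left, log_div (by linarith) hε0.ne']
  ring

theorem li_sub_li {x y : ℝ} (hx : 1 < x) (hy : 1 < y) :
    li x - li y = ∫ u in y..x, 1 / log u := by
  have h1 : (1 : ℝ) ∉ uIcc y x := fun h => by
    rcases le_total y x with hyx | hxy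
    · rw [uIcc_of_le hyx] at h; linarith [h.1]
    · rw [uIcc_of_ge hxy] at h; linarith [h.1]
  rw [li_eq_integral_regInvLog_add_log hx, li_eq_integral_regInvLog_add_log hy,
    integral_one_div_log (by linarith) (by linarith) h1, log_div (by linarith) (by linarith),
    ← integral_interval_sub_left (a := 0) (b := x) (c := y)
      (intervalIntegrable_regInvLog le_rfl (by linarith))
      (intervalIntegrable_regInvLog le_rfl (by linarith))]
  ring

theorem hasDerivAt_li {x : ℝ} (hx : 1 < x) : HasDerivAt li (1 / log x) x := by
  have hint : HasDerivAt (fun y => li x + ∫ u in x..y, 1 / log u) (1 / log x) x := by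
    refine (integral_hasDerivAt_right IntervalIntegrable.refl
      (continuousOn_one_div_log.stronglyMeasurableAtFilter isOpen_Ioi x hx)
      (continuousOn_one_div_log.continuousAt (Ioi_mem_nhds hx))).const_add (li x)
  refine hint.congr_of_eventuallyEq ?_
  filter_upwards [Ioi_mem_nhds hx] with y hy
  rw [← li_sub_li hy hx]
  ring

theorem li_le_log_two_add {x : ℝ} (hx : 1 < x) : li x ≤ log 2 + (x - 1) / 2 + log (x - 1) := by
  rw [li_eq_integral_regInvLog_add_log hx,
    ← integral_add_adjacent_intervals (b := 1) (intervalIntegrable_regInvLog le_rfl zero_le_one)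
      (intervalIntegrable_regInvLog zero_le_one (by linarith))]
  have h01 : ∫ u in (0 : ℝ)..1, regInvLog u ≤ log 2 := by
    calc ∫ u in (0 : ℝ)..1, regInvLog u ≤ ∫ u in (0 : ℝ)..1, 1 / (u + 1) :=
          integral_mono_on zero_le_one (intervalIntegrable_regInvLog le_rfl zero_le_one)
            (continuousOn_const.div (by fun_prop) fun u hu => by
              rw [uIcc_of_le zero_le_one] at hu; linarith [hu.1]).intervalIntegrable
            fun u hu => regInvLog_le_one_div_add_one hu.1 hu.2
      _ = log 2 := by
          rw [integral_comp_add_right (fun u => 1 / u), integral_one_div (by norm_num)]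
          norm_num
  have h1x : ∫ u in (1 : ℝ)..x, regInvLog u ≤ (x - 1) / 2 := by
    calc ∫ u in (1 : ℝ)..x, regInvLog u ≤ ∫ u in (1 : ℝ)..x, (1 / 2 : ℝ) :=
          integral_mono_on hx.le (intervalIntegrable_regInvLog zero_le_one (by linarith))
            intervalIntegrable_const fun u hu => regInvLog_le_half hu.1
      _ = (x - 1) / 2 := by simp; ring
  linarith

theorem li_exp_four_lt : li (exp 4) < 3 / 8 * exp 4 := by
  set E := exp (1 / 2)
  have hE1 : 1 < E := one_lt_exp_iff.2 (by norm_num)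
  have hE2 : E ^ 2 = exp 1 := by rw [← exp_nat_mul]; norm_num
  have hE8 : exp 4 = E ^ 8 := by rw [← exp_nat_mul]; norm_num
  have hlog : ∀ k : ℕ, log (E ^ k) = k / 2 := fun k => by
    rw [log_pow, log_exp]; ring
  have hpos : ∀ k ∈ Finset.Icc 2 8, E ^ k ∈ Ioi 1 := fun k hk =>
    one_lt_pow₀ hE1 (by simp at hk; omega)
  have htrap := convexOn_one_div_log.integral_le_sum_trapezoid continuousOn_one_div_log
    (a := (E ^ ·)) (by norm_num) (fun k _ => pow_le_pow_right₀ hE1.le k.le_succ) hpos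
  have hli2 := li_le_log_two_add (hpos 2 (by simp))
  have hlog1 := log_le_sub_one_of_pos (sub_pos.2 (hpos 2 (by simp)))
  have hsub := li_sub_li (hpos 8 (by simp)) (hpos 2 (by simp))
  simp only [Finset.sum_Ico_eq_sum_range, Finset.sum_range_succ, Finset.sum_range_zero,
    hlog] at htrap
  have hEU : E ≤ 1.65 := by
    refine le_of_pow_le_pow_left₀ two_ne_zero (by norm_num) ?_
    rw [hE2]; linarith [exp_one_lt_d9]
  have hEL : 54 ≤ E ^ 8 := by
    rw [show E ^ 8 = (E ^ 2) ^ 4 by ring, hE2]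
    calc (54 : ℝ) ≤ 2.718 ^ 4 := by norm_num
      _ ≤ exp 1 ^ 4 := pow_le_pow_left₀ (by norm_num) (by linarith [exp_one_gt_d9]) 4
  have hpowU : ∀ k : ℕ, E ^ k ≤ 1.65 ^ k := fun k => pow_le_pow_left₀ (by linarith) hEU k
  have h2 := hpowU 2; have h3 := hpowU 3; have h4 := hpowU 4
  have h5 := hpowU 5; have h6 := hpowU 6; have h7 := hpowU 7
  rw [hE8]
  norm_num at htrap hli2 hlog1 hsub h2 h3 h4 h5 h6 h7 ⊢
  linarith [log_two_lt_d9]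

theorem isMinOn_of_hasDerivAt {f f' : ℝ → ℝ} {a c : ℝ} (hac : a < c)
    (hf : ∀ x ∈ Ioi a, HasDerivAt f (f' x) x) (hleft : ∀ x ∈ Ioo a c, f' x ≤ 0)
    (hright : ∀ x ∈ Ioi c, 0 ≤ f' x) : IsMinOn f (Ioi a) c := by
  have hcont : ContinuousOn f (Ioi a) := fun x hx => (hf x hx).continuousAt.continuousWithinAt
  refine isMinOn_iff.2 fun x hx => ?_
  rcases le_total x c with hxc | hcx
  · refine antitoneOn_of_hasDerivWithinAt_nonpos (f' := f') (convex_Icc x c)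
      (hcont.mono (Icc_subset_Ioi_iff hxc |>.2 hx)) (fun y hy => ?_) (fun y hy => ?_)
      ⟨le_rfl, hxc⟩ ⟨hxc, le_rfl⟩ hxc
    all_goals rw [interior_Icc] at hy
    · exact (hf y (lt_trans hx hy.1)).hasDerivWithinAt
    · exact hleft y ⟨lt_trans hx hy.1, hy.2⟩
  · refine monotoneOn_of_hasDerivWithinAt_nonneg (f' := f') (convex_Icc c x)
      (hcont.mono (Icc_subset_Ioi_iff hcx |>.2 hac)) (fun y hy => ?_) (fun y hy => ?_)
      ⟨le_rfl, hcx⟩ ⟨hcx, le_rfl⟩ hcx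
    all_goals rw [interior_Icc] at hy
    · exact (hf y (lt_trans hac hy.1)).hasDerivWithinAt
    · exact hright y hy.1

theorem hasDerivAt_sub_li {x : ℝ} (hx : 1 < x) :
    HasDerivAt (fun y => y / log y + 2 * y / log y ^ 2 - li y) ((log x - 4) / log x ^ 3) x := by
  have hlog := hasDerivAt_log (zero_lt_one.trans hx).ne'
  have hL : log x ≠ 0 := (log_pos hx).ne'
  refine ((((hasDerivAt_id' x).div hlog hL).add
    (((hasDerivAt_id' x).const_mul 2).div (hlog.pow 2) (pow_ne_zero 2 hL))).sub
    (hasDerivAt_li hx)).congr_deriv ?_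
  simp only [Pi.pow_apply]
  field_simp
  ring

theorem li_lt (x : ℝ) (hx : 1 < x) :
    li x < x / Real.log x + 2 * x / (Real.log x) ^ 2 := by
  have he4 : 1 < exp 4 := one_lt_exp_iff.2 (by norm_num)
  have hmin := isMinOn_of_hasDerivAt he4 (fun y hy => hasDerivAt_sub_li hy)
    (fun y hy => div_nonpos_of_nonpos_of_nonneg
      (sub_nonpos.2 ((log_lt_iff_lt_exp (by linarith [hy.1])).2 hy.2).le)
      (pow_nonneg (log_nonneg hy.1.le) 3))
    (fun y hy => div_nonneg
      (sub_nonneg.2 ((lt_log_iff_exp_lt (by linarith [he4, hy.out])).2 hy.out).le)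
      (pow_nonneg (log_nonneg (he4.trans hy.out).le) 3))
  have hx' := isMinOn_iff.1 hmin x hx
  simp only [log_exp] at hx'
  linarith [li_exp_four_lt]
end
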